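/- arXiv:2403.15540 — 2 statements merged into one kernel-verified Lean document; each statement's English description precedes it below -/
import Mathlib

section
/- For all positive integers n, the sum (1/2^n) * Σ_{k=1}^{n} C(n,k)/k equals 2/n + O(1/n²); precisely, there exists a constant C such that for all n ≥ 1, |(1/2^n) Σ_{k=1}^n C(n,k)/k − 2/n| ≤ C/n². -/
/-!
Pascal's rule together with `C(n, i) / (i + 1) = C(n + 1, i + 1) / (n + 1)` gives the recursion
`S (n + 1) = S n + (2 ^ (n + 1) - 1) / (n + 1)` for `S n = ∑_{k=1}^n C(n, k) / k`. Hence the error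
`e n = S n / 2 ^ n - 2 / n` satisfies `e (n + 1) = e n / 2 + O(1 / n²)`, and a sequence that is
halved at each step up to an `O(1 / n²)` forcing term is itself `O(1 / n²)`.
-/

open Finset

noncomputable def chooseDivSum (n : ℕ) : ℝ := ∑ k ∈ Icc 1 n, (n.choose k : ℝ) / k

lemma chooseDivSum_eq_sum_range (n : ℕ) :
    chooseDivSum n = ∑ i ∈ range n, (n.choose (i + 1) : ℝ) / (i + 1) := by
  rw [chooseDivSum, ← Ico_add_one_right_eq_Icc, sum_Ico_eq_sum_range]
  simp [add_comm]

lemma choose_div_add_one (n i : ℕ) :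
    (n.choose i : ℝ) / (i + 1) = ((n + 1).choose (i + 1) : ℝ) / (n + 1) := by
  rw [div_eq_div_iff (by positivity) (by positivity), mul_comm]
  exact_mod_cast Nat.add_one_mul_choose_eq n i

lemma sum_range_choose_add_one (n : ℕ) :
    ∑ i ∈ range n, (n.choose (i + 1) : ℝ) = 2 ^ n - 1 := by
  have h := Nat.sum_range_choose n
  rw [sum_range_succ'] at h
  rw [eq_sub_iff_add_eq]
  exact_mod_cast by simpa using h

lemma chooseDivSum_succ (n : ℕ) :
    chooseDivSum (n + 1) = chooseDivSum n + (2 ^ (n + 1) - 1) / (n + 1) := by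
  have pascal (i : ℕ) : ((n + 1).choose (i + 1) : ℝ) / (i + 1)
      = (n.choose (i + 1) : ℝ) / (i + 1) + ((n + 1).choose (i + 1) : ℝ) / (n + 1) := by
    rw [← choose_div_add_one, ← add_div, ← Nat.cast_add, Nat.choose_succ_succ',
      Nat.add_comm (n.choose i)]
  rw [chooseDivSum_eq_sum_range, chooseDivSum_eq_sum_range, sum_congr rfl fun i _ => pascal i,
    sum_add_distrib, sum_range_succ _ n, Nat.choose_succ_self, ← sum_div,
    sum_range_choose_add_one]
  push_cast
  ring

lemma abs_chooseDivSum_error_succ_le {n : ℕ} (hn : 1 ≤ n) :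
    |chooseDivSum (n + 1) / 2 ^ (n + 1) - 2 / (n + 1 : ℕ)|
      ≤ |chooseDivSum n / 2 ^ n - 2 / n| / 2 + 1 / (n : ℝ) ^ 2 := by
  have hx : (1 : ℝ) ≤ n := by exact_mod_cast hn
  have hpow : (n : ℝ) + 1 ≤ 2 ^ (n + 1) := by exact_mod_cast (Nat.lt_two_pow_self (n := n + 1)).le
  have step : chooseDivSum (n + 1) / 2 ^ (n + 1) - 2 / (n + 1 : ℕ)
      = (chooseDivSum n / 2 ^ n - 2 / n) / 2
        + (1 / (n * (n + 1)) - 1 / ((n + 1) * 2 ^ (n + 1))) := by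
    rw [chooseDivSum_succ]
    push_cast
    field_simp
    ring
  have forcing : |1 / ((n : ℝ) * (n + 1)) - 1 / ((n + 1) * 2 ^ (n + 1))| ≤ 1 / (n : ℝ) ^ 2 := by
    rw [abs_of_nonneg]
    · calc _ ≤ 1 / ((n : ℝ) * (n + 1)) := sub_le_self _ (by positivity)
        _ ≤ 1 / (n : ℝ) ^ 2 := by gcongr; nlinarith
    · rw [sub_nonneg]; gcongr; linarith
  rw [step]
  calc _ ≤ |(chooseDivSum n / 2 ^ n - 2 / n) / 2|
          + |1 / ((n : ℝ) * (n + 1)) - 1 / ((n + 1) * 2 ^ (n + 1))| := abs_add_le _ _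
    _ ≤ _ := by rw [abs_div, abs_two]; gcongr

lemma exists_abs_le_div_sq_of_abs_succ_le {e : ℕ → ℝ} {c : ℝ} (hc : 0 ≤ c)
    (h : ∀ n, 1 ≤ n → |e (n + 1)| ≤ |e n| / 2 + c / (n : ℝ) ^ 2) :
    ∃ C : ℝ, ∀ n, 1 ≤ n → |e n| ≤ C / (n : ℝ) ^ 2 := by
  -- from `n = 3` on, `(n + 1)² ≤ 16 n² / 9`, so halving propagates `C / n²` once `C ≥ 16 c`
  set C := 16 * c + ∑ k ∈ Icc (1 : ℕ) 3, (k : ℝ) ^ 2 * |e k|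
  have hsmall : ∀ n ∈ Icc 1 3, |e n| ≤ C / (n : ℝ) ^ 2 := by
    intro n hn
    have hn0 : (0 : ℝ) < n := by have := (mem_Icc.1 hn).1; positivity
    rw [le_div_iff₀ (by positivity), mul_comm]
    have := single_le_sum (f := fun k : ℕ => (k : ℝ) ^ 2 * |e k|) (fun _ _ => by positivity) hn
    linarith
  have hlarge : ∀ n, 3 ≤ n → |e n| ≤ C / (n : ℝ) ^ 2 := by
    intro n hn
    induction n, hn using Nat.le_induction with
    | base => exact hsmall 3 (by simp)
    | succ n hn ih =>
      have hx : (3 : ℝ) ≤ n := by exact_mod_cast hn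
      have hC : 16 * c ≤ C := le_add_of_nonneg_right (sum_nonneg fun _ _ => by positivity)
      calc |e (n + 1)| ≤ |e n| / 2 + c / (n : ℝ) ^ 2 := h n (by omega)
        _ ≤ C / (n : ℝ) ^ 2 / 2 + c / (n : ℝ) ^ 2 := by gcongr
        _ = (C / 2 + c) / (n : ℝ) ^ 2 := by ring
        _ ≤ C / ((n + 1 : ℕ) : ℝ) ^ 2 := by
          have hgrowth : 9 * ((n : ℝ) + 1) ^ 2 ≤ 16 * (n : ℝ) ^ 2 := by nlinarith
          rw [div_le_div_iff₀ (by positivity) (by positivity)]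
          push_cast
          nlinarith [mul_le_mul_of_nonneg_left hgrowth (by positivity : 0 ≤ C / 2 + c)]
  exact ⟨C, fun n hn => if h3 : 3 ≤ n then hlarge n h3 else hsmall n (mem_Icc.2 ⟨hn, by omega⟩)⟩

theorem alpha_star_asymptotics :
    ∃ C : ℝ, ∀ n : ℕ, 1 ≤ n →
      |(1 / 2 ^ n) * (∑ k ∈ Finset.Icc 1 n, (n.choose k : ℝ) / k) - 2 / n| ≤ C / n ^ 2 := by
  obtain ⟨C, hC⟩ := exists_abs_le_div_sq_of_abs_succ_le zero_le_one (e := fun n =>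
    chooseDivSum n / 2 ^ n - 2 / n) fun n hn => abs_chooseDivSum_error_succ_le hn
  refine ⟨C, fun n hn => ?_⟩
  rw [one_div_mul_eq_div]
  exact hC n hn
end

section
/- For all positive integers n, (1/2^n) * Σ_{k=1}^{n} C(n,k)/k² = 4/n² + O(1/n³); precisely, there exists a constant C such that for all n ≥ 1, |(1/2^n) Σ_{k=1}^n C(n,k)/k² − 4/n²| ≤ C/n³. -/
/-!
Expand `1 / k²` to first order about `k = n / 2`:
`1 / k² = 4 / n² + 8 (n - 2k) / n³ + (n - 2k)² (n + 4k) / (k² n³)`.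
Against the weights `C(n, k)`, `1 ≤ k ≤ n`, the first two terms contribute exactly `4 (2ⁿ - 3) / n²`
because `∑ C(n, k) (n - 2k) = 0`. The remainder is nonnegative and, splitting at `k = n / 4`,
at most `80 ((n - 2k)² / n⁴ + (n - 2k)⁶ / n⁶)`; the second and sixth central binomial moments
are `n 2ⁿ` and `O(n³ 2ⁿ)`, so the weighted remainder is `O(2ⁿ / n³)`.
-/

open Finset

theorem sum_range_succ_choose_smul {M : Type*} [AddCommMonoid M] (f : ℕ → M) (n : ℕ) :
    ∑ k ∈ range (n + 2), (n + 1).choose k • f k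
      = ∑ k ∈ range (n + 1), n.choose k • (f k + f (k + 1)) := by
  have h : ∑ k ∈ range (n + 2), n.choose k • f k = ∑ k ∈ range (n + 1), n.choose k • f k := by
    rw [sum_range_succ, Nat.choose_succ_self, zero_smul, add_zero]
  rw [sum_range_succ', Nat.choose_zero_right]
  simp_rw [Nat.choose_succ_succ, add_smul, smul_add, sum_add_distrib]
  rw [← h, sum_range_succ' (fun k => n.choose k • f k), Nat.choose_zero_right]
  abel

/-- `2ⁿ` times the `m`-th moment of a sum of `n` independent uniform signs `±1`. -/
noncomputable def binomMoment (n m : ℕ) : ℝ :=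
  ∑ k ∈ range (n + 1), (n.choose k : ℝ) * ((n : ℝ) - 2 * k) ^ m

theorem binomMoment_succ (n m : ℕ) :
    binomMoment (n + 1) m
      = ∑ k ∈ range (n + 1),
          (n.choose k : ℝ) * (((n : ℝ) - 2 * k + 1) ^ m + ((n : ℝ) - 2 * k - 1) ^ m) := by
  simp only [binomMoment, ← nsmul_eq_mul]
  rw [sum_range_succ_choose_smul]
  refine sum_congr rfl fun k _ => ?_
  push_cast
  ring_nf

theorem binomMoment_zero_right (n : ℕ) : binomMoment n 0 = 2 ^ n := by
  simpa [binomMoment] using (Nat.cast_inj (R := ℝ)).2 (Nat.sum_range_choose n)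

theorem binomMoment_one (n : ℕ) : binomMoment n 1 = 0 := by
  induction n with
  | zero => simp [binomMoment]
  | succ n ih =>
    rw [binomMoment_succ, ← zero_mul (2 : ℝ), ← ih, binomMoment, sum_mul]
    exact sum_congr rfl fun k _ => by ring

theorem binomMoment_two (n : ℕ) : binomMoment n 2 = n * 2 ^ n := by
  induction n with
  | zero => simp [binomMoment]
  | succ n ih =>
    have : binomMoment (n + 1) 2 = 2 * binomMoment n 2 + 2 * binomMoment n 0 := by
      rw [binomMoment_succ]; simp only [binomMoment, mul_sum, ← sum_add_distrib]
      exact sum_congr rfl fun k _ => by ring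
    rw [this, ih, binomMoment_zero_right]; push_cast; ring

theorem binomMoment_four (n : ℕ) : binomMoment n 4 = (3 * n ^ 2 - 2 * n) * 2 ^ n := by
  induction n with
  | zero => simp [binomMoment]
  | succ n ih =>
    have : binomMoment (n + 1) 4
        = 2 * binomMoment n 4 + 12 * binomMoment n 2 + 2 * binomMoment n 0 := by
      rw [binomMoment_succ]; simp only [binomMoment, mul_sum, ← sum_add_distrib]
      exact sum_congr rfl fun k _ => by ring
    rw [this, ih, binomMoment_two, binomMoment_zero_right]; push_cast; ring

theorem binomMoment_six (n : ℕ) :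
    binomMoment n 6 = (15 * n ^ 3 - 30 * n ^ 2 + 16 * n) * 2 ^ n := by
  induction n with
  | zero => simp [binomMoment]
  | succ n ih =>
    have : binomMoment (n + 1) 6 = 2 * binomMoment n 6 + 30 * binomMoment n 4
        + 30 * binomMoment n 2 + 2 * binomMoment n 0 := by
      rw [binomMoment_succ]; simp only [binomMoment, mul_sum, ← sum_add_distrib]
      exact sum_congr rfl fun k _ => by ring
    rw [this, ih, binomMoment_four, binomMoment_two, binomMoment_zero_right]; push_cast; ring

theorem binomMoment_six_le (n : ℕ) : binomMoment n 6 ≤ 15 * n ^ 3 * 2 ^ n := by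
  rw [binomMoment_six]
  have : (16 : ℝ) * n ≤ 30 * n ^ 2 := by
    norm_cast; nlinarith [Nat.le_self_pow two_ne_zero n]
  gcongr; linarith

theorem sum_Icc_one_choose_mul_pow (n m : ℕ) :
    ∑ k ∈ Icc 1 n, (n.choose k : ℝ) * ((n : ℝ) - 2 * k) ^ m = binomMoment n m - n ^ m := by
  rw [binomMoment, Nat.range_succ_eq_Icc_zero, ← insert_Icc_add_one_left_eq_Icc n.zero_le,
    sum_insert (by simp)]
  simp

noncomputable def invSqRemainder (n k : ℝ) : ℝ := (n - 2 * k) ^ 2 * (n + 4 * k) / (k ^ 2 * n ^ 3)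

theorem one_div_sq_eq_taylor {n k : ℝ} (hn : n ≠ 0) (hk : k ≠ 0) :
    1 / k ^ 2 = 4 / n ^ 2 + 8 * (n - 2 * k) / n ^ 3 + invSqRemainder n k := by
  rw [invSqRemainder]
  field_simp
  ring

theorem invSqRemainder_nonneg {n k : ℝ} (hn : 0 ≤ n) (hk : 0 ≤ k) : 0 ≤ invSqRemainder n k := by
  unfold invSqRemainder; positivity

theorem invSqRemainder_le {n k : ℝ} (hk : 1 ≤ k) (hkn : k ≤ n) :
    invSqRemainder n k ≤ 80 * ((n - 2 * k) ^ 2 / n ^ 4 + (n - 2 * k) ^ 6 / n ^ 6) := by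
  have hn : 0 < n := by linarith
  set x := n - 2 * k
  have h5 : invSqRemainder n k ≤ 5 * x ^ 2 / (k ^ 2 * n ^ 2) := by
    rw [invSqRemainder, div_le_div_iff₀ (by positivity) (by positivity)]
    have : x ^ 2 * (n + 4 * k) ≤ x ^ 2 * (5 * n) := by gcongr; linarith
    calc x ^ 2 * (n + 4 * k) * (k ^ 2 * n ^ 2) ≤ x ^ 2 * (5 * n) * (k ^ 2 * n ^ 2) := by gcongr
      _ = 5 * x ^ 2 * (k ^ 2 * n ^ 3) := by ring
  refine h5.trans ?_
  rcases le_or_gt n (4 * k) with hbig | hsmall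
  · calc 5 * x ^ 2 / (k ^ 2 * n ^ 2) ≤ 5 * x ^ 2 / ((n / 4) ^ 2 * n ^ 2) := by gcongr; linarith
      _ = 80 * (x ^ 2 / n ^ 4) := by field_simp; ring
      _ ≤ _ := by gcongr; simp; positivity
  · have hx : n ^ 4 ≤ 16 * x ^ 4 := by
      have : n ≤ 2 * x := by simp only [x]; linarith
      nlinarith [pow_le_pow_left₀ hn.le this 4]
    calc 5 * x ^ 2 / (k ^ 2 * n ^ 2) ≤ 5 * x ^ 2 / (1 ^ 2 * n ^ 2) := by gcongr
      _ ≤ 80 * (x ^ 6 / n ^ 6) := by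
        rw [div_le_iff₀ (by positivity)]
        field_simp
        nlinarith [sq_nonneg x]
      _ ≤ _ := by gcongr; simp; positivity

theorem sum_choose_div_sq_eq (n : ℕ) (hn : n ≠ 0) :
    ∑ k ∈ Icc 1 n, (n.choose k : ℝ) / (k : ℝ) ^ 2
      = 4 * (2 ^ n - 3) / n ^ 2 + ∑ k ∈ Icc 1 n, (n.choose k : ℝ) * invSqRemainder n k := by
  have hn' : (n : ℝ) ≠ 0 := by exact_mod_cast hn
  have hC := sum_Icc_one_choose_mul_pow n 0
  have hC1 := sum_Icc_one_choose_mul_pow n 1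
  simp only [pow_zero, mul_one, pow_one, binomMoment_zero_right, binomMoment_one] at hC hC1
  calc ∑ k ∈ Icc 1 n, (n.choose k : ℝ) / (k : ℝ) ^ 2
      = ∑ k ∈ Icc 1 n, ((n.choose k : ℝ) * (4 / n ^ 2)
          + (n.choose k : ℝ) * ((n : ℝ) - 2 * k) * (8 / n ^ 3)
          + (n.choose k : ℝ) * invSqRemainder n k) := by
        refine sum_congr rfl fun k hk => ?_
        have hk : (k : ℝ) ≠ 0 := by simp at hk ⊢; omega
        rw [div_eq_mul_one_div _ ((k : ℝ) ^ 2), one_div_sq_eq_taylor hn' hk]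
        ring
    _ = 4 * (2 ^ n - 3) / n ^ 2 + ∑ k ∈ Icc 1 n, (n.choose k : ℝ) * invSqRemainder n k := by
        rw [sum_add_distrib, sum_add_distrib, ← sum_mul, ← sum_mul, hC, hC1]
        field_simp
        ring

theorem sum_choose_mul_invSqRemainder_le (n : ℕ) (hn : 0 < n) :
    ∑ k ∈ Icc 1 n, (n.choose k : ℝ) * invSqRemainder n k ≤ 1280 * 2 ^ n / n ^ 3 := by
  have hn : (0 : ℝ) < n := by exact_mod_cast hn
  calc ∑ k ∈ Icc 1 n, (n.choose k : ℝ) * invSqRemainder n k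
      ≤ ∑ k ∈ Icc 1 n, (n.choose k : ℝ) *
          (80 * (((n : ℝ) - 2 * k) ^ 2 / n ^ 4 + ((n : ℝ) - 2 * k) ^ 6 / n ^ 6)) := by
        refine sum_le_sum fun k hk => ?_
        rw [mem_Icc] at hk
        gcongr
        exact invSqRemainder_le (by exact_mod_cast hk.1) (by exact_mod_cast hk.2)
    _ ≤ ∑ k ∈ range (n + 1), (n.choose k : ℝ) *
          (80 * (((n : ℝ) - 2 * k) ^ 2 / n ^ 4 + ((n : ℝ) - 2 * k) ^ 6 / n ^ 6)) := by
        refine sum_le_sum_of_subset_of_nonneg (fun k hk => ?_) fun _ _ _ => by positivity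
        simp only [mem_Icc, mem_range] at hk ⊢; omega
    _ = 80 * (binomMoment n 2 / n ^ 4 + binomMoment n 6 / n ^ 6) := by
        simp only [binomMoment, mul_sum, sum_div, ← sum_add_distrib]
        exact sum_congr rfl fun k _ => by ring
    _ ≤ 80 * (n * 2 ^ n / n ^ 4 + 15 * n ^ 3 * 2 ^ n / n ^ 6) := by
        rw [binomMoment_two]; gcongr; exact binomMoment_six_le n
    _ = 1280 * 2 ^ n / n ^ 3 := by field_simp; ring

theorem sum_choose_div_sq_asymptotics :
    ∃ C : ℝ, ∀ n : ℕ, 1 ≤ n →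
      |(1 / 2 ^ n) * (∑ k ∈ Finset.Icc 1 n, (n.choose k : ℝ) / (k : ℝ) ^ 2) - 4 / n ^ 2| ≤ C / n ^ 3 := by
  refine ⟨1280, fun n hn => ?_⟩
  set R := ∑ k ∈ Icc 1 n, (n.choose k : ℝ) * invSqRemainder n k
  have hN : (0 : ℝ) < n := by exact_mod_cast hn
  have hR0 : 0 ≤ R :=
    sum_nonneg fun k _ => mul_nonneg (by positivity) (invSqRemainder_nonneg hN.le k.cast_nonneg)
  have hR : R / 2 ^ n ≤ 1280 / n ^ 3 := by
    rw [div_le_iff₀ (by positivity), div_mul_eq_mul_div]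
    exact sum_choose_mul_invSqRemainder_le n hn
  have hsmall : 12 / (n ^ 2 * 2 ^ n) ≤ 12 / (n : ℝ) ^ 3 := by
    have : (n : ℝ) ≤ 2 ^ n := by exact_mod_cast n.lt_two_pow_self.le
    gcongr; rw [pow_succ]; gcongr
  have key : 1 / 2 ^ n * (4 * (2 ^ n - 3) / n ^ 2 + R) - 4 / n ^ 2
      = R / 2 ^ n - 12 / (n ^ 2 * 2 ^ n) := by
    field_simp; ring
  rw [sum_choose_div_sq_eq n (by omega), key, abs_le]
  constructor
  · have : 12 / (n : ℝ) ^ 3 ≤ 1280 / n ^ 3 := by gcongr; norm_num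
    linarith [div_nonneg hR0 (by positivity : (0 : ℝ) ≤ 2 ^ n)]
  · linarith [div_nonneg (by norm_num : (0 : ℝ) ≤ 12) (by positivity : (0 : ℝ) ≤ n ^ 2 * 2 ^ n)]
end
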